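/- arXiv:2503.19088 — 4 statements merged into one kernel-verified Lean document; each statement's English description precedes it below -/
import Mathlib

section
/- Let G be a simple graph and u, w ∈ V(G) with w ∉ [u]_E. Then w has only finitely many neighbors in [u]_E. Consequently, every edge of the quotient graph G/[u]_E has only finitely many preimage edges in G under the quotient projection. -/
open SimpleGraph

/-- A ray in a simple graph: an injective sequence of successively adjacent vertices. -/
structure GraphRay {V : Type*} (G : SimpleGraph V) where
  toFun : ℕ → V
  injective : Function.Injective toFun
  adj : ∀ n, G.Adj (toFun n) (toFun (n + 1))

/-- `u` and `v` are connected by a walk of `G` avoiding the vertex set `F`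
(i.e. they lie in the same connected component of `G − F`). -/
def ReachAvoiding {V : Type*} (G : SimpleGraph V) (F : Set V) (u v : V) : Prop :=
  ∃ w : G.Walk u v, ∀ x ∈ w.support, x ∉ F

/-- `r` and `r'` have tails lying in the same connected component of `G − F`
(deletion of the vertex set `F`). -/
def TailsConnected {V : Type*} (G : SimpleGraph V) (F : Set V) (r r' : ℕ → V) : Prop :=
  ∃ k k', (∀ n, k ≤ n → r n ∉ F) ∧ (∀ n, k' ≤ n → r' n ∉ F) ∧
    ReachAvoiding G F (r k) (r' k')

/-- `r` and `r'` have tails lying in the same connected component of `G − F`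
(deletion of the edge set `F`). -/
def EdgeTailsConnected {V : Type*} (G : SimpleGraph V) (F : Set (Sym2 V)) (r r' : ℕ → V) : Prop :=
  ∃ k k', (∀ n, k ≤ n → s(r n, r (n + 1)) ∉ F) ∧ (∀ n, k' ≤ n → s(r' n, r' (n + 1)) ∉ F) ∧
    (G.deleteEdges F).Reachable (r k) (r' k')

/-- `v` dominates the ray `r`: for every finite vertex set `F` not containing `v`,
`v` and some tail of `r` lie in the same connected component of `G − F`. -/
def Dominates {V : Type*} (G : SimpleGraph V) (v : V) (r : ℕ → V) : Prop :=
  ∀ F : Finset V, v ∉ F →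
    ∃ k, (∀ n, k ≤ n → r n ∉ (F : Set V)) ∧ ReachAvoiding G (F : Set V) v (r k)

/-- A vertex is timid if it dominates no ray. -/
def Timid {V : Type*} (G : SimpleGraph V) (v : V) : Prop :=
  ∀ r : GraphRay G, ¬ Dominates G v r.toFun

/-- `t(G)`, the set of timid vertices of `G`. -/
def timidSet {V : Type*} (G : SimpleGraph V) : Set V := {v | Timid G v}

/-- Edge-equivalence of rays: no finite set of edges of `G` separates their tails. -/
def EdgeEquiv {V : Type*} (G : SimpleGraph V) (r r' : GraphRay G) : Prop :=
  ∀ F : Finset (Sym2 V), (F : Set (Sym2 V)) ⊆ G.edgeSet →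
    EdgeTailsConnected G (F : Set (Sym2 V)) r.toFun r'.toFun

/-- `U`-equivalence of rays: no finite subset of `U` separates their tails. -/
def UEquiv {V : Type*} (G : SimpleGraph V) (U : Set V) (r r' : GraphRay G) : Prop :=
  ∀ F : Finset V, (F : Set V) ⊆ U → TailsConnected G (F : Set V) r.toFun r'.toFun

/-- The `U`-end space: the quotient of the rays of `G` by `U`-equivalence. -/
def OmegaU {V : Type*} (G : SimpleGraph V) (U : Set V) := Quot (UEquiv G U)

/-- The basic open subset `Ω_U(F, ε)` of the `U`-end space. -/
def uBasic {V : Type*} (G : SimpleGraph V) (U : Set V) (F : Finset V) (ε : OmegaU G U) :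
    Set (OmegaU G U) :=
  {ξ | ∃ r r' : GraphRay G, Quot.mk (UEquiv G U) r = ε ∧ Quot.mk (UEquiv G U) r' = ξ ∧
    TailsConnected G (F : Set V) r.toFun r'.toFun}

instance {V : Type*} (G : SimpleGraph V) (U : Set V) : TopologicalSpace (OmegaU G U) :=
  TopologicalSpace.generateFrom
    {S | ∃ F : Finset V, (F : Set V) ⊆ U ∧ ∃ ε : OmegaU G U, S = uBasic G U F ε}

/-- The edge-end space: the quotient of the rays of `G` by edge-equivalence. -/
def OmegaE {V : Type*} (G : SimpleGraph V) := Quot (EdgeEquiv G)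

/-- The basic open subset `Ω_E(F, ε)` of the edge-end space, for a finite edge set `F`. -/
def eBasic {V : Type*} (G : SimpleGraph V) (F : Finset (Sym2 V)) (ε : OmegaE G) :
    Set (OmegaE G) :=
  {ξ | ∃ r r' : GraphRay G, Quot.mk (EdgeEquiv G) r = ε ∧ Quot.mk (EdgeEquiv G) r' = ξ ∧
    EdgeTailsConnected G (F : Set (Sym2 V)) r.toFun r'.toFun}

instance {V : Type*} (G : SimpleGraph V) : TopologicalSpace (OmegaE G) :=
  TopologicalSpace.generateFrom
    {S | ∃ F : Finset (Sym2 V), (F : Set (Sym2 V)) ⊆ G.edgeSet ∧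
      ∃ ε : OmegaE G, S = eBasic G F ε}
/-- `u ∼_A v`: for every finite set `F ⊆ A` of edges, `u` and `v` lie in the same
connected component of `G − F`. -/
def EdgeSetEquiv {V : Type*} (G : SimpleGraph V) (A : Set (Sym2 V)) (u v : V) : Prop :=
  ∀ F : Finset (Sym2 V), (F : Set (Sym2 V)) ⊆ A → (G.deleteEdges (F : Set (Sym2 V))).Reachable u v

/-- `u ∼_E v`: no finite set of edges of `G` separates `u` from `v`. -/
def VertexEdgeEquiv {V : Type*} (G : SimpleGraph V) (u v : V) : Prop :=
  EdgeSetEquiv G G.edgeSet u v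

/-- `[u]_E`, the `∼_E`-class of `u`. -/
def eClass {V : Type*} (G : SimpleGraph V) (u : V) : Set V := {v | VertexEdgeEquiv G u v}

/-- `E_t(G)`: the set of edges of `G` having at least one timid endpoint. -/
def timidEdges {V : Type*} (G : SimpleGraph V) : Set (Sym2 V) :=
  {e | e ∈ G.edgeSet ∧ ∃ v ∈ e, Timid G v}

/-- The quotient graph `G/[u]_E`: the class `[u]_E` is collapsed to the single
vertex `none`; the remaining vertices keep their adjacencies, and `none` is adjacent
to `w` iff some member of `[u]_E` is adjacent to `w` in `G`. -/
def quotGraph {V : Type*} (G : SimpleGraph V) (u : V) :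
    SimpleGraph (Option {w : V // w ∉ eClass G u}) where
  Adj x y :=
    match x, y with
    | some a, some b => G.Adj a.1 b.1
    | some a, none => ∃ v ∈ eClass G u, G.Adj v a.1
    | none, some b => ∃ v ∈ eClass G u, G.Adj v b.1
    | none, none => False
  symm := by
    constructor
    rintro (_ | a) (_ | b) h
    · exact h
    · exact h
    · exact h
    · exact h.symm
  loopless := by
    constructor
    rintro (_ | a) h
    · exact h
    · exact G.irrefl h

open Classical in
/-- The quotient projection `V(G) → V(G/[u]_E)`. -/
noncomputable def quotProj {V : Type*} (G : SimpleGraph V) (u : V) : V → Option {w : V // w ∉ eClass G u} :=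
  fun v => if h : v ∈ eClass G u then none else some ⟨v, h⟩

/-!
If `w ∉ [u]_E`, some finite edge set `F` separates `u` from `w`. Every neighbour `x` of `w` in
`[u]_E` is still joined to `u` in `G − F`, so the edge `wx` lies in `F`; hence there are at most
`|F|` such neighbours. A quotient edge has an endpoint `a ≠ [u]_E`, whose fibre is `{a}`, so
its preimage edges join `a` to the fibre of the other endpoint: one vertex, or the finitely
many neighbours of `a` in `[u]_E`.
-/

lemma SimpleGraph.Adj.mem_of_deleteEdges_separates {V : Type*} {G : SimpleGraph V}
    {F : Set (Sym2 V)} {u w x : V} (hwx : G.Adj w x) (hux : (G.deleteEdges F).Reachable u x)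
    (huw : ¬(G.deleteEdges F).Reachable u w) : s(w, x) ∈ F := by
  by_contra hF
  exact huw (hux.trans (Adj.reachable (deleteEdges_adj.2 ⟨hwx.symm, by rwa [Sym2.eq_swap]⟩)))

lemma finite_adj_inter_eClass {V : Type*} (G : SimpleGraph V) {u w : V}
    (hw : w ∉ eClass G u) : {x | x ∈ eClass G u ∧ G.Adj w x}.Finite := by
  simp only [eClass, VertexEdgeEquiv, EdgeSetEquiv, Set.mem_ofPred_eq, not_forall] at hw
  obtain ⟨F, hFE, huw⟩ := hw
  refine (F.finite_toSet.preimage (Sym2.mkEmbedding w).injective.injOn).subset ?_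
  rintro x ⟨hx, hwx⟩
  exact hwx.mem_of_deleteEdges_separates (hx F hFE) huw

lemma quotProj_eq_none_iff {V : Type*} (G : SimpleGraph V) (u : V) {x : V} :
    quotProj G u x = none ↔ x ∈ eClass G u := by
  by_cases h : x ∈ eClass G u <;> simp [quotProj, h]

lemma quotProj_eq_some_iff {V : Type*} (G : SimpleGraph V) (u : V) {x : V}
    {a : {w : V // w ∉ eClass G u}} : quotProj G u x = some a ↔ x = a.1 := by
  by_cases h : x ∈ eClass G u
  · simp only [quotProj, dif_pos h, reduceCtorEq, false_iff]
    rintro rfl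
    exact a.2 h
  · simp [quotProj, h, Subtype.ext_iff]

lemma edges_map_eq_subset_image {V W : Type*} (G : SimpleGraph V) (f : V → W) {p q : W}
    {v : V} (hp : ∀ x, f x = p → x = v) :
    {e | e ∈ G.edgeSet ∧ Sym2.map f e = s(p, q)} ⊆
      (fun y => s(v, y)) '' {y | G.Adj v y ∧ f y = q} := by
  rintro e ⟨he, hmap⟩
  induction e using Sym2.ind with
  | _ x y =>
    rw [mem_edgeSet] at he
    rcases Sym2.eq_iff.1 (Sym2.map_mk f x y ▸ hmap) with ⟨hx, hy⟩ | ⟨hx, hy⟩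
    · exact ⟨y, ⟨hp x hx ▸ he, hy⟩, by rw [hp x hx]⟩
    · exact ⟨x, ⟨hp y hy ▸ he.symm, hx⟩, by rw [hp y hy, Sym2.eq_swap]⟩

lemma finite_adj_quotProj_eq {V : Type*} (G : SimpleGraph V) (u : V)
    (a : {w : V // w ∉ eClass G u}) (q : Option {w : V // w ∉ eClass G u}) :
    {y | G.Adj a.1 y ∧ quotProj G u y = q}.Finite := by
  cases q with
  | none =>
    simpa only [quotProj_eq_none_iff, and_comm] using finite_adj_inter_eClass G a.2
  | some b =>
    refine (Set.finite_singleton b.1).subset ?_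
    rintro y ⟨-, hy⟩
    exact (quotProj_eq_some_iff G u).1 hy

lemma exists_eq_some_of_mem_edgeSet_quotGraph {V : Type*} (G : SimpleGraph V) (u : V)
    {e : Sym2 (Option {w : V // w ∉ eClass G u})} (he : e ∈ (quotGraph G u).edgeSet) :
    ∃ a q, e = s(some a, q) := by
  induction e using Sym2.ind with
  | _ p q =>
    match p, q, he with
    | some a, q, _ => exact ⟨a, q, rfl⟩
    | none, some b, _ => exact ⟨b, none, Sym2.eq_swap⟩

/-- If `w ∉ [u]_E`, then `w` has only finitely many neighbours inside
`[u]_E`; consequently, every edge of the quotient graph `G/[u]_E` has only finitely many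
preimage edges in `G` under the quotient projection. -/
theorem finitely_many_neighbors_in_eClass {V : Type*} (G : SimpleGraph V) (u : V) :
    (∀ w : V, w ∉ eClass G u → {x | x ∈ eClass G u ∧ G.Adj w x}.Finite) ∧
    (∀ e ∈ (quotGraph G u).edgeSet,
      {e' | e' ∈ G.edgeSet ∧ Sym2.map (quotProj G u) e' = e}.Finite) := by
  refine ⟨fun w hw => finite_adj_inter_eClass G hw, fun e he => ?_⟩
  obtain ⟨a, q, rfl⟩ := exists_eq_some_of_mem_edgeSet_quotGraph G u he
  exact ((finite_adj_quotProj_eq G u a q).image _).subset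
    (edges_map_eq_subset_image G _ fun x => (quotProj_eq_some_iff G u).1)
end

section
/- Let G be a simple graph. Every ray of H(G) is edge-equivalent in H(G) to a ray all of whose vertices lie in V(G); indeed, every ray in H(G) meets infinitely many vertices of some ray of G. -/
open SimpleGraph

/-- The subdivision of `G`: every edge `{u, v}` of `G` is replaced by a new vertex
adjacent exactly to `u` and `v`. -/
def subdivision {V : Type*} (G : SimpleGraph V) : SimpleGraph (V ⊕ G.edgeSet) where
  Adj x y :=
    match x, y with
    | Sum.inl v, Sum.inr e => v ∈ (e : Sym2 V)
    | Sum.inr e, Sum.inl v => v ∈ (e : Sym2 V)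
    | _, _ => False
  symm := by
    constructor
    rintro (v | e) (w | f) h
    · exact h
    · exact h
    · exact h
    · exact h
  loopless := by constructor; rintro (v | e) h <;> exact h

/-- The set of edges of `G` neither of whose endpoints is timid. -/
def nonTimidEdges {V : Type*} (G : SimpleGraph V) : Set (Sym2 V) :=
  {e | e ∈ G.edgeSet ∧ ∀ v ∈ e, ¬ Timid G v}

/-- The graph `H(G)`: for each edge `e` of `G` with no timid endpoint, countably many
new vertices are added, each adjacent exactly to the two endpoints of `e`.
`G` is the induced subgraph on the `Sum.inl` vertices. -/
def Hgraph {V : Type*} (G : SimpleGraph V) : SimpleGraph (V ⊕ (↥(nonTimidEdges G) × ℕ)) where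
  Adj x y :=
    match x, y with
    | Sum.inl a, Sum.inl b => G.Adj a b
    | Sum.inl a, Sum.inr p => a ∈ (p.1 : Sym2 V)
    | Sum.inr p, Sum.inl a => a ∈ (p.1 : Sym2 V)
    | Sum.inr _, Sum.inr _ => False
  symm := by
    constructor
    rintro (a | p) (b | q) h
    · exact h.symm
    · exact h
    · exact h
    · exact h
  loopless := by
    constructor
    rintro (a | p) h
    · exact G.loopless.irrefl a h
    · exact h

/-- A ray of `G`, viewed as a ray of `H(G)` under the identification of `G` with an
induced subgraph of `H(G)`. -/
def liftRay {V : Type*} (G : SimpleGraph V) (r : GraphRay G) : GraphRay (Hgraph G) where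
  toFun := fun n => Sum.inl (r.toFun n)
  injective := fun a b h => r.injective (Sum.inl.inj h)
  adj := fun n => r.adj n

/-!
The vertices of `H(G)` outside `V(G)` are pairwise non-adjacent, so a ray of `H(G)` visits `V(G)`
at least every other step. Between two consecutive visits it either uses an edge of `G` directly
or passes through a new vertex of `U_e`, whose two neighbours span the edge `e` of `G`. Hence the
visits to `V(G)`, in order, form a ray of `G`, which is a subsequence of the given ray; and two rays
meeting infinitely often cannot be separated by finitely many edges.
-/

namespace GraphRay

variable {W : Type*} {H : SimpleGraph W}

lemma edge_injective (t : GraphRay H) :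
    Function.Injective fun n => s(t.toFun n, t.toFun (n + 1)) := by
  intro n m h
  rcases Sym2.eq_iff.mp h with ⟨h₁, -⟩ | ⟨h₁, h₂⟩
  · exact t.injective h₁
  · have := t.injective h₁
    have := t.injective h₂
    omega

lemma exists_forall_edge_notMem (t : GraphRay H) {F : Set (Sym2 W)} (hF : F.Finite) :
    ∃ k, ∀ n, k ≤ n → s(t.toFun n, t.toFun (n + 1)) ∉ F := by
  obtain ⟨b, hb⟩ := (hF.preimage t.edge_injective.injOn).bddAbove
  exact ⟨b + 1, fun n hn hmem => by have := hb hmem; omega⟩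

lemma edgeEquiv_of_infinite_meet (t t' : GraphRay H)
    (h : {n | ∃ m, t.toFun m = t'.toFun n}.Infinite) : EdgeEquiv H t t' := by
  intro F _
  obtain ⟨k, hk⟩ := t.exists_forall_edge_notMem F.finite_toSet
  obtain ⟨k', hk'⟩ := t'.exists_forall_edge_notMem F.finite_toSet
  have hearly : (t'.toFun ⁻¹' (t.toFun '' Set.Iio k)).Finite :=
    ((Set.finite_Iio k).image t.toFun).preimage t'.injective.injOn
  obtain ⟨n, ⟨⟨m, hm⟩, hnearly⟩, hkn⟩ := (h.sdiff hearly).exists_gt k'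
  have hkm : k ≤ m := not_lt.mp fun hmk => hnearly ⟨m, hmk, hm⟩
  exact ⟨m, n, fun i hi => hk i (hkm.trans hi), fun i hi => hk' i (by omega),
    hm ▸ Reachable.refl _⟩

end GraphRay

namespace Nat

variable {p : ℕ → Prop}

lemma infinite_setOf_of_forall_or_succ (h : ∀ m, p m ∨ p (m + 1)) : {m | p m}.Infinite :=
  Set.infinite_of_forall_exists_gt fun a => (h (a + 1)).elim (⟨a + 1, ·, by omega⟩)
    (⟨a + 2, ·, by omega⟩)

lemma nth_succ_of_forall_or_succ (h : ∀ m, p m ∨ p (m + 1)) (k : ℕ) :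
    nth p (k + 1) = nth p k + 1 ∨ (nth p (k + 1) = nth p k + 2 ∧ ¬ p (nth p k + 1)) := by
  have hlt : nth p k < nth p (k + 1) :=
    (nth_strictMono (infinite_setOf_of_forall_or_succ h)) (lt_add_one k)
  have hgap : ∀ a, nth p k < a → p a → nth p (k + 1) ≤ a := fun a hka ha =>
    not_lt.mp fun hak => (le_nth_of_lt_nth_succ hak ha).not_gt hka
  by_cases h₁ : p (nth p k + 1)
  · exact .inl (le_antisymm (hgap _ (lt_add_one _) h₁) hlt)
  · have h₂ := (h (nth p k + 1)).resolve_left h₁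
    have hle := hgap _ (by omega) h₂
    have hne : nth p (k + 1) ≠ nth p k + 1 := fun he => h₁ (he ▸ nth_mem_of_infinite
      (infinite_setOf_of_forall_or_succ h) (k + 1))
    exact .inr ⟨by omega, h₁⟩

end Nat

namespace Hgraph

variable {V : Type*} {G : SimpleGraph V}

lemma adj_of_adj_inr_of_adj_inr {a b : V} {q : ↥(nonTimidEdges G) × ℕ}
    (ha : (Hgraph G).Adj (Sum.inl a) (Sum.inr q)) (hb : (Hgraph G).Adj (Sum.inr q) (Sum.inl b))
    (hab : a ≠ b) : G.Adj a b := by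
  have he : (q.1 : Sym2 V) = s(a, b) := (Sym2.mem_and_mem_iff hab).mp ⟨ha, hb⟩
  exact G.mem_edgeSet.mp (he ▸ q.1.2.1)

def IsBaseIndex (s : GraphRay (Hgraph G)) (m : ℕ) : Prop := ∃ a, s.toFun m = Sum.inl a

lemma isBaseIndex_or_succ (s : GraphRay (Hgraph G)) (m : ℕ) :
    IsBaseIndex s m ∨ IsBaseIndex s (m + 1) := by
  rcases hm : s.toFun m with a | q
  · exact .inl ⟨a, hm⟩
  rcases hm₁ : s.toFun (m + 1) with b | q'
  · exact .inr ⟨b, hm₁⟩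
  have := s.adj m
  rw [hm, hm₁] at this
  exact this.elim

lemma isBaseIndex_infinite (s : GraphRay (Hgraph G)) : {m | IsBaseIndex s m}.Infinite :=
  Nat.infinite_setOf_of_forall_or_succ (isBaseIndex_or_succ s)

noncomputable def baseVertex (s : GraphRay (Hgraph G)) (n : ℕ) : V :=
  (Nat.nth_mem_of_infinite (isBaseIndex_infinite s) n).choose

lemma toFun_nth_isBaseIndex (s : GraphRay (Hgraph G)) (n : ℕ) :
    s.toFun (Nat.nth (IsBaseIndex s) n) = Sum.inl (baseVertex s n) :=
  (Nat.nth_mem_of_infinite (isBaseIndex_infinite s) n).choose_spec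

lemma baseVertex_injective (s : GraphRay (Hgraph G)) : Function.Injective (baseVertex s) :=
  fun a b h => Nat.nth_injective (isBaseIndex_infinite s) <| s.injective <| by
    rw [toFun_nth_isBaseIndex, toFun_nth_isBaseIndex, h]

lemma baseVertex_adj (s : GraphRay (Hgraph G)) (n : ℕ) :
    G.Adj (baseVertex s n) (baseVertex s (n + 1)) := by
  have hstep := s.adj (Nat.nth (IsBaseIndex s) n)
  rw [toFun_nth_isBaseIndex] at hstep
  rcases Nat.nth_succ_of_forall_or_succ (isBaseIndex_or_succ s) n with h | ⟨h, hmid⟩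
  · rwa [← h, toFun_nth_isBaseIndex] at hstep
  rcases hq : s.toFun (Nat.nth (IsBaseIndex s) n + 1) with a | q
  · exact absurd ⟨a, hq⟩ hmid
  have hstep' := s.adj (Nat.nth (IsBaseIndex s) n + 1)
  rw [hq, show Nat.nth (IsBaseIndex s) n + 1 + 1 = Nat.nth (IsBaseIndex s) (n + 1) by omega,
    toFun_nth_isBaseIndex] at hstep'
  rw [hq] at hstep
  exact adj_of_adj_inr_of_adj_inr hstep hstep' ((baseVertex_injective s).ne n.succ_ne_self.symm)

noncomputable def baseRay (s : GraphRay (Hgraph G)) : GraphRay G where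
  toFun := baseVertex s
  injective := baseVertex_injective s
  adj := baseVertex_adj s

end Hgraph

/-- Every ray of `H(G)` meets infinitely many vertices of some ray of
`G`, and in particular is edge-equivalent in `H(G)` to a ray all of whose vertices lie in
`V(G)`. -/
theorem every_Hgraph_ray_edgeEquiv_to_Graph_ray {V : Type*} (G : SimpleGraph V)
    (s : GraphRay (Hgraph G)) :
    ∃ r : GraphRay G,
      {n : ℕ | ∃ m : ℕ, s.toFun m = Sum.inl (r.toFun n)}.Infinite ∧
      EdgeEquiv (Hgraph G) s (liftRay G r) := by
  have hmeet : {n : ℕ | ∃ m : ℕ, s.toFun m = Sum.inl ((Hgraph.baseRay s).toFun n)} = Set.univ :=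
    Set.eq_univ_of_forall fun n => ⟨_, Hgraph.toFun_nth_isBaseIndex s n⟩
  have hinf := hmeet ▸ Set.infinite_univ
  exact ⟨Hgraph.baseRay s, hinf, s.edgeEquiv_of_infinite_meet _ hinf⟩
end

section
/- Let G be a simple graph and U ⊆ V(G). Then the map ρ_• : Ω_U(G) → D_U(G), sending the U-class of a ray r to the U-direction ρ_r, is a topological embedding (injective, continuous, and open onto its image). -/
open SimpleGraph

/-- Symmetry of `ReachAvoiding`. -/
theorem ReachAvoiding.symm {V : Type*} {G : SimpleGraph V} {F : Set V} {u v : V}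
    (h : ReachAvoiding G F u v) : ReachAvoiding G F v u := by
  obtain ⟨w, hw⟩ := h
  exact ⟨w.reverse, fun x hx =>
    hw x (by simpa [SimpleGraph.Walk.support_reverse] using hx)⟩

/-- Transitivity of `ReachAvoiding`. -/
theorem ReachAvoiding.trans {V : Type*} {G : SimpleGraph V} {F : Set V} {u v x : V}
    (h1 : ReachAvoiding G F u v) (h2 : ReachAvoiding G F v x) : ReachAvoiding G F u x := by
  obtain ⟨w1, hw1⟩ := h1
  obtain ⟨w2, hw2⟩ := h2
  refine ⟨w1.append w2, fun y hy => ?_⟩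
  rcases (SimpleGraph.Walk.mem_support_append_iff w1 w2).mp hy with h | h
  · exact hw1 y h
  · exact hw2 y h

/-- Walking along a ray whose tail from `i` on avoids `F` yields reachability in `G − F`. -/
theorem GraphRay.reach_of_tail_avoid {V : Type*} {G : SimpleGraph V} (r : GraphRay G)
    (F : Set V) {i j : ℕ} (hij : i ≤ j) (h : ∀ n, i ≤ n → r.toFun n ∉ F) :
    ReachAvoiding G F (r.toFun i) (r.toFun j) := by
  induction j, hij using Nat.le_induction with
  | base => exact ⟨SimpleGraph.Walk.nil, by
      intro x hx
      simp only [SimpleGraph.Walk.support_nil, List.mem_singleton] at hx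
      subst hx; exact h i le_rfl⟩
  | succ j hij ih =>
    obtain ⟨w, hw⟩ := ih
    refine ⟨w.concat (r.adj j), fun x hx => ?_⟩
    rw [SimpleGraph.Walk.support_concat, List.mem_append] at hx
    rcases hx with hx | hx
    · exact hw x hx
    · simp only [List.mem_singleton] at hx
      subst hx; exact h (j + 1) (by omega)

/-- A ray eventually avoids every finite vertex set. -/
theorem GraphRay.exists_tail_avoid {V : Type*} {G : SimpleGraph V} (r : GraphRay G)
    (F : Finset V) : ∃ k, ∀ n, k ≤ n → r.toFun n ∉ (F : Set V) := by
  have hfin : {n | r.toFun n ∈ (F : Set V)}.Finite :=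
    Set.Finite.preimage r.injective.injOn F.finite_toSet
  obtain ⟨b, hb⟩ := hfin.bddAbove
  exact ⟨b + 1, fun n hn hmem => by have := hb hmem; omega⟩
/-- A `U`-direction of `G`: an assignment, to each finite `F ⊆ U`, of an infinite
connected component of `G − F` (recorded as its vertex set), compatible with inclusions. -/
structure UDirection {V : Type*} (G : SimpleGraph V) (U : Set V) where
  comp : (F : Finset V) → (F : Set V) ⊆ U → Set V
  isComp : ∀ (F : Finset V) (hF : (F : Set V) ⊆ U),
    ∃ v, v ∉ (F : Set V) ∧ comp F hF = {w | ReachAvoiding G (F : Set V) v w}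
  infinite : ∀ (F : Finset V) (hF : (F : Set V) ⊆ U), (comp F hF).Infinite
  mono : ∀ (F F' : Finset V) (hF : (F : Set V) ⊆ U) (hF' : (F' : Set V) ⊆ U),
    F ⊆ F' → comp F' hF' ⊆ comp F hF

theorem UDirection.ext' {V : Type*} {G : SimpleGraph V} {U : Set V}
    {ρ ρ' : UDirection G U} (h : ρ.comp = ρ'.comp) : ρ = ρ' := by
  cases ρ; cases ρ'; cases h; rfl

/-- The direction space `D_U(G)`, topologized by the basic open sets
`D_U(F, ρ) = {ρ' : ρ'(F) = ρ(F)}` for finite `F ⊆ U`. -/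
instance {V : Type*} (G : SimpleGraph V) (U : Set V) : TopologicalSpace (UDirection G U) :=
  TopologicalSpace.generateFrom
    {S | ∃ (F : Finset V) (hF : (F : Set V) ⊆ U) (ρ : UDirection G U),
      S = {ρ' : UDirection G U | ρ'.comp F hF = ρ.comp F hF}}

/-- The `U`-direction `ρ_r` of a ray `r`: it sends a finite `F ⊆ U` to the connected
component of `G − F` containing a tail of `r`. -/
def rayDirection {V : Type*} (G : SimpleGraph V) (U : Set V) (r : GraphRay G) :
    UDirection G U where
  comp F _ := {w | ∃ k, (∀ n, k ≤ n → r.toFun n ∉ (F : Set V)) ∧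
    ReachAvoiding G (F : Set V) (r.toFun k) w}
  isComp := by
    intro F _
    obtain ⟨k0, hk0⟩ := r.exists_tail_avoid F
    refine ⟨r.toFun k0, hk0 k0 le_rfl, ?_⟩
    ext w
    constructor
    · rintro ⟨k, hk, hre⟩
      rcases le_total k0 k with hh | hh
      · exact (r.reach_of_tail_avoid _ hh hk0).trans hre
      · exact (ReachAvoiding.symm (r.reach_of_tail_avoid _ hh hk)).trans hre
    · intro hw
      exact ⟨k0, hk0, hw⟩
  infinite := by
    intro F _
    obtain ⟨k0, hk0⟩ := r.exists_tail_avoid F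
    refine Set.Infinite.mono ?_ ((Set.Ici_infinite k0).image r.injective.injOn)
    rintro _ ⟨n, hn, rfl⟩
    exact ⟨k0, hk0, r.reach_of_tail_avoid _ hn hk0⟩
  mono := by
    rintro F F' hF hF' hss w ⟨k, ht, hw⟩
    exact ⟨k, fun n hn hmem => ht n hn (Finset.coe_subset.mpr hss hmem),
      hw.imp fun p hp => fun x hx hmem => hp x hx (Finset.coe_subset.mpr hss hmem)⟩

/-- The map `ρ_• : Ω_U(G) → D_U(G)` sending the `U`-class `[r]_U` of a ray to `ρ_r`. -/
def rhoMap {V : Type*} (G : SimpleGraph V) (U : Set V) : OmegaU G U → UDirection G U :=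
  Quot.lift (rayDirection G U) (by
    have key : ∀ a b : GraphRay G, UEquiv G U a b → ∀ (F : Finset V) (hF : (F : Set V) ⊆ U),
        (rayDirection G U a).comp F hF ⊆ (rayDirection G U b).comp F hF := by
      rintro a b hab F hF w ⟨k, hk, hre⟩
      obtain ⟨k1, k1', h1, h1', hco⟩ := hab F hF
      refine ⟨k1', h1', ReachAvoiding.trans (ReachAvoiding.symm hco)
        (ReachAvoiding.trans ?_ hre)⟩
      rcases le_total k1 k with hh | hh
      · exact a.reach_of_tail_avoid _ hh h1
      · exact ReachAvoiding.symm (a.reach_of_tail_avoid _ hh hk)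
    intro r r' h
    have hsymm : UEquiv G U r' r := by
      intro F hF
      obtain ⟨k, k', h1, h2, h3⟩ := h F hF
      exact ⟨k', k, h2, h1, ReachAvoiding.symm h3⟩
    refine UDirection.ext' ?_
    funext F hF
    exact subset_antisymm (key r r' h F hF) (key r' r hsymm F hF))

/-!
For rays `r`, `r'` and finite `F ⊆ U`, the components `ρ_r(F)` and `ρ_{r'}(F)` coincide exactly
when `r` and `r'` have tails in the same component of `G − F`. Hence the preimage of the basic
set `D_U(F, ρ_ε)` under `ρ_•` is the basic set `Ω_U(F, ε)`: this gives continuity, and shows that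
the topology of `Ω_U(G)` is induced by `ρ_•`. Letting `F` range over all finite subsets of `U`
gives injectivity.
-/

section

variable {V : Type*} {G : SimpleGraph V} {U : Set V}

theorem TailsConnected.symm {F : Set V} {r r' : ℕ → V} (h : TailsConnected G F r r') :
    TailsConnected G F r' r :=
  let ⟨k, k', hk, hk', hreach⟩ := h
  ⟨k', k, hk', hk, hreach.symm⟩

theorem rayDirection_comp_subset {r r' : GraphRay G} {F : Finset V} (hF : (F : Set V) ⊆ U)
    (h : TailsConnected G (F : Set V) r.toFun r'.toFun) :
    (rayDirection G U r).comp F hF ⊆ (rayDirection G U r').comp F hF := by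
  rintro w ⟨k, hk, hreach⟩
  obtain ⟨m, m', hm, hm', hmm'⟩ := h
  have hkm : ReachAvoiding G (F : Set V) (r.toFun m) (r.toFun k) := by
    rcases le_total m k with hle | hle
    · exact r.reach_of_tail_avoid _ hle hm
    · exact (r.reach_of_tail_avoid _ hle hk).symm
  exact ⟨m', hm', hmm'.symm.trans (hkm.trans hreach)⟩

theorem rayDirection_comp_eq_iff (r r' : GraphRay G) {F : Finset V} (hF : (F : Set V) ⊆ U) :
    (rayDirection G U r).comp F hF = (rayDirection G U r').comp F hF ↔
      TailsConnected G (F : Set V) r.toFun r'.toFun := by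
  refine ⟨fun h => ?_, fun h =>
    (rayDirection_comp_subset hF h).antisymm (rayDirection_comp_subset hF h.symm)⟩
  obtain ⟨k, hk⟩ := r.exists_tail_avoid F
  have hmem : r.toFun k ∈ (rayDirection G U r).comp F hF :=
    ⟨k, hk, r.reach_of_tail_avoid _ le_rfl hk⟩
  obtain ⟨k', hk', hreach⟩ := h ▸ hmem
  exact ⟨k, k', hk, hk', hreach.symm⟩

variable (G U)

theorem rhoMap_injective : Function.Injective (rhoMap G U) := by
  rintro ⟨r⟩ ⟨r'⟩ h
  refine Quot.sound fun F hF => (rayDirection_comp_eq_iff r r' hF).1 ?_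
  exact congrFun (congrFun (congrArg UDirection.comp h) F) hF

theorem rhoMap_preimage_setOf_comp_eq (ε : OmegaU G U) {F : Finset V} (hF : (F : Set V) ⊆ U) :
    rhoMap G U ⁻¹' {ρ | ρ.comp F hF = (rhoMap G U ε).comp F hF} = uBasic G U F ε := by
  induction ε using Quot.ind with | _ r => ?_
  ext ξ
  induction ξ using Quot.ind with | _ r' => ?_
  refine ⟨fun h => ⟨r, r', rfl, rfl, (rayDirection_comp_eq_iff r r' hF).1 h.symm⟩, ?_⟩
  rintro ⟨s, s', hs, hs', hss'⟩
  rw [← hs, ← hs']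
  exact ((rayDirection_comp_eq_iff s s' hF).2 hss').symm

theorem isOpen_uBasic (ε : OmegaU G U) {F : Finset V} (hF : (F : Set V) ⊆ U) :
    IsOpen (uBasic G U F ε) :=
  TopologicalSpace.isOpen_generateFrom_of_mem ⟨F, hF, ε, rfl⟩

theorem isOpen_setOf_comp_eq (ρ : UDirection G U) {F : Finset V} (hF : (F : Set V) ⊆ U) :
    IsOpen {ρ' : UDirection G U | ρ'.comp F hF = ρ.comp F hF} :=
  TopologicalSpace.isOpen_generateFrom_of_mem ⟨F, hF, ρ, rfl⟩

theorem continuous_rhoMap : Continuous (rhoMap G U) := by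
  refine continuous_generateFrom_iff.2 ?_
  rintro _ ⟨F, hF, ρ, rfl⟩
  refine isOpen_iff_forall_mem_open.2 fun ε hε => ⟨uBasic G U F ε, ?_, isOpen_uBasic G U ε hF, ?_⟩
  · rw [← rhoMap_preimage_setOf_comp_eq G U ε hF]
    exact fun ξ hξ => hξ.trans hε
  · rw [← rhoMap_preimage_setOf_comp_eq G U ε hF]
    rfl

end

/-- For every `U ⊆ V(G)`, the map `ρ_• : Ω_U(G) → D_U(G)`, sending the
`U`-class of a ray `r` to the `U`-direction `ρ_r`, is a topological embedding. -/
theorem rhoMap_isEmbedding {V : Type*} (G : SimpleGraph V) (U : Set V) :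
    Topology.IsEmbedding (rhoMap G U) := by
  refine ⟨⟨le_antisymm (continuous_iff_le_induced.1 (continuous_rhoMap G U)) ?_⟩,
    rhoMap_injective G U⟩
  refine le_generateFrom ?_
  rintro _ ⟨F, hF, ε, rfl⟩
  rw [← rhoMap_preimage_setOf_comp_eq G U ε hF]
  exact isOpen_induced (isOpen_setOf_comp_eq G U _ hF)
end

section
/- Let G be the star of countably many rays: a graph consisting of countably infinitely many pairwise disjoint rays together with one additional vertex c adjacent to the initial vertex of each of these rays, and let U = V(G) ∖ {c}. Then the assignment sending each finite F ⊆ U to the connected component of c in G − F is a U-direction of G, and it is not equal to ρ_r for any ray r in G. In particular, ρ_• : Ω_U(G) → D_U(G) is not surjective. -/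
open SimpleGraph

/-- The star of countably many rays: the vertex `none` is the center `c`, and for each
`i : ℕ`, the vertices `some (i, 0), some (i, 1), …` form a ray whose initial vertex
`some (i, 0)` is adjacent to the center. -/
def starOfRays : SimpleGraph (Option (ℕ × ℕ)) where
  Adj x y :=
    (∃ i, (x = none ∧ y = some (i, 0)) ∨ (y = none ∧ x = some (i, 0))) ∨
    (∃ i n, (x = some (i, n) ∧ y = some (i, n + 1)) ∨ (y = some (i, n) ∧ x = some (i, n + 1)))
  symm := by
    constructor
    intro x y h
    rcases h with ⟨i, h⟩ | ⟨i, n, h⟩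
    · exact Or.inl ⟨i, h.symm⟩
    · exact Or.inr ⟨i, n, h.symm⟩
  loopless := by
    constructor
    intro x h
    rcases h with ⟨i, ⟨h1, h2⟩ | ⟨h1, h2⟩⟩ | ⟨i, n, ⟨h1, h2⟩ | ⟨h1, h2⟩⟩ <;> simp_all

/-- `U = V(G) ∖ {c}` for the star of rays. -/
def starU : Set (Option (ℕ × ℕ)) := {v | v ≠ none}

/-! The center `c` lies in an infinite component of `G − F` for every finite `F ⊆ U`, because
`F` misses all but finitely many branches. But every ray has a tail inside a single branch `i`,
and deleting the first vertex of that branch cuts this tail off from `c`. -/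

section ReachAvoiding

variable {V : Type*} {G : SimpleGraph V} {F F' : Set V} {u v : V}

theorem ReachAvoiding.refl (hv : v ∉ F) : ReachAvoiding G F v v :=
  ⟨.nil, by simpa using hv⟩

theorem SimpleGraph.Adj.reachAvoiding (h : G.Adj u v) (hu : u ∉ F) (hv : v ∉ F) :
    ReachAvoiding G F u v :=
  ⟨.cons h .nil, by simp [hu, hv]⟩

theorem ReachAvoiding.mono (hF : F' ⊆ F) (h : ReachAvoiding G F u v) :
    ReachAvoiding G F' u v :=
  h.imp fun _ hw x hx hxF => hw x hx (hF hxF)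

def IsClosedAvoiding (G : SimpleGraph V) (F S : Set V) : Prop :=
  ∀ ⦃x y⦄, x ∈ S → G.Adj x y → y ∉ F → y ∈ S

theorem ReachAvoiding.mem_of_isClosedAvoiding {S : Set V} (hS : IsClosedAvoiding G F S)
    (h : ReachAvoiding G F u v) (hu : u ∈ S) : v ∈ S := by
  obtain ⟨w, hw⟩ := h
  induction w with
  | nil => exact hu
  | cons hadj p ih =>
    exact ih (hS hu hadj (hw _ (by simp))) fun x hx => hw x (by simp [hx])

end ReachAvoiding

section GraphRay

variable {V : Type*} {G : SimpleGraph V} {U F : Set V}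

theorem GraphRay.tail_mem_of_isClosedAvoiding (r : GraphRay G) {S : Set V}
    (hS : IsClosedAvoiding G F S) {k : ℕ}
    (hk : ∀ n, k ≤ n → r.toFun n ∉ F) (hrk : r.toFun k ∈ S) :
    ∀ n, k ≤ n → r.toFun n ∈ S :=
  fun _ hn => (r.reach_of_tail_avoid F hn hk).mem_of_isClosedAvoiding hS hrk

theorem GraphRay.notMem_rayDirection_of_isClosedAvoiding (r : GraphRay G) {F : Finset V}
    (hF : (F : Set V) ⊆ U) {S : Set V} (hS : IsClosedAvoiding G F S) {k : ℕ}
    (hrS : ∀ n, k ≤ n → r.toFun n ∈ S) {v : V} (hv : v ∉ S) :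
    v ∉ (rayDirection G U r).comp F hF := by
  rintro ⟨l, hl, hreach⟩
  have htail : ReachAvoiding G F (r.toFun (max k l)) (r.toFun l) :=
    (r.reach_of_tail_avoid _ (le_max_right k l) hl).symm
  exact hv ((htail.trans hreach).mem_of_isClosedAvoiding hS (hrS _ (le_max_left k l)))

end GraphRay

namespace starOfRays

theorem adj_center (i : ℕ) : starOfRays.Adj none (some (i, 0)) :=
  Or.inl ⟨i, Or.inl ⟨rfl, rfl⟩⟩

theorem adj_succ (i n : ℕ) : starOfRays.Adj (some (i, n)) (some (i, n + 1)) :=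
  Or.inr ⟨i, n, Or.inl ⟨rfl, rfl⟩⟩

theorem eq_of_adj_some {i m : ℕ} {v : Option (ℕ × ℕ)} (h : starOfRays.Adj (some (i, m)) v) :
    (v = none ∧ m = 0) ∨ v = some (i, m + 1) ∨ ∃ n, v = some (i, n) ∧ m = n + 1 := by
  simp only [starOfRays, reduceCtorEq, Option.some.injEq, Prod.mk.injEq, false_and,
    false_or] at h
  aesop

def branch (i : ℕ) : Set (Option (ℕ × ℕ)) := Set.range fun n => some (i, n)

def branchTail (i : ℕ) : Set (Option (ℕ × ℕ)) := Set.range fun n => some (i, n + 1)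

theorem isClosedAvoiding_branch (i : ℕ) : IsClosedAvoiding starOfRays {none} (branch i) := by
  intro x y hx hxy hy
  obtain ⟨m, rfl⟩ := hx
  rcases eq_of_adj_some hxy with ⟨rfl, -⟩ | rfl | ⟨n, rfl, -⟩
  · exact absurd rfl hy
  · exact ⟨m + 1, rfl⟩
  · exact ⟨n, rfl⟩

theorem isClosedAvoiding_branchTail (i : ℕ) :
    IsClosedAvoiding starOfRays {some (i, 0)} (branchTail i) := by
  intro x y hx hxy hy
  obtain ⟨m, rfl⟩ := hx
  rcases eq_of_adj_some hxy with ⟨-, h⟩ | rfl | ⟨n, rfl, hn⟩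
  · omega
  · exact ⟨m + 1, rfl⟩
  · obtain rfl : n = m := by omega
    cases n with
    | zero => exact absurd rfl hy
    | succ n => exact ⟨n, rfl⟩

/-- A ray passes through the center at most once, and away from it cannot change branches. -/
theorem exists_tail_mem_branch (r : GraphRay starOfRays) :
    ∃ i k, ∀ n, k ≤ n → r.toFun n ∈ branch i := by
  obtain ⟨k, hk⟩ := r.exists_tail_avoid {none}
  obtain ⟨i, m, hkm⟩ : ∃ i m, r.toFun k = some (i, m) := by
    rcases h : r.toFun k with _ | ⟨i, m⟩
    · exact absurd (by simp [h]) (hk k le_rfl)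
    · exact ⟨i, m, rfl⟩
  refine ⟨i, k, r.tail_mem_of_isClosedAvoiding (isClosedAvoiding_branch i) ?_ ⟨m, hkm.symm⟩⟩
  simpa using hk

theorem center_reachAvoiding_branch {F : Set (Option (ℕ × ℕ))} (hc : none ∉ F) {i : ℕ}
    (hi : ∀ n, some (i, n) ∉ F) (n : ℕ) : ReachAvoiding starOfRays F none (some (i, n)) := by
  induction n with
  | zero => exact (adj_center i).reachAvoiding hc (hi 0)
  | succ n ih => exact ih.trans ((adj_succ i n).reachAvoiding (hi n) (hi (n + 1)))

theorem exists_branch_disjoint (F : Finset (Option (ℕ × ℕ))) :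
    ∃ i : ℕ, ∀ n, some (i, n) ∉ F := by
  obtain ⟨i, hi⟩ := Infinite.exists_notMem_finset (F.image fun v => (v.getD (0, 0)).1)
  exact ⟨i, fun n hn => hi (Finset.mem_image.mpr ⟨_, hn, rfl⟩)⟩

theorem center_notMem {F : Finset (Option (ℕ × ℕ))}
    (hF : (F : Set (Option (ℕ × ℕ))) ⊆ starU) :
    none ∉ (F : Set (Option (ℕ × ℕ))) :=
  fun h => hF h rfl

def centerDirection : UDirection starOfRays starU where
  comp F _ := {w | ReachAvoiding starOfRays (F : Set (Option (ℕ × ℕ))) none w}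
  isComp F hF := ⟨none, center_notMem hF, rfl⟩
  infinite F hF := by
    obtain ⟨i, hi⟩ := exists_branch_disjoint F
    refine Set.Infinite.mono ?_ (Set.infinite_range_of_injective
      (f := fun n : ℕ => (some (i, n) : Option (ℕ × ℕ))) fun a b h => by simpa using h)
    rintro _ ⟨n, rfl⟩
    exact center_reachAvoiding_branch (center_notMem hF) hi n
  mono _ _ _ _ hss _ hw := hw.mono (Finset.coe_subset.mpr hss)

theorem centerDirection_ne_rayDirection (r : GraphRay starOfRays) :
    centerDirection ≠ rayDirection starOfRays starU r := by
  intro h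
  obtain ⟨i, k, hk⟩ := exists_tail_mem_branch r
  obtain ⟨l, hl⟩ := r.exists_tail_avoid {some (i, 0)}
  have hF : (({some (i, 0)} : Finset _) : Set (Option (ℕ × ℕ))) ⊆ starU := by simp [starU]
  have hrTail : ∀ n, max k l ≤ n → r.toFun n ∈ branchTail i := by
    intro n hn
    obtain ⟨m, hm⟩ := hk n (le_of_max_le_left hn)
    cases m with
    | zero => exact absurd (by simp [← hm]) (hl n (le_of_max_le_right hn))
    | succ m => exact ⟨m, hm⟩
  have hcenter : none ∈ (rayDirection starOfRays starU r).comp _ hF :=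
    h ▸ ReachAvoiding.refl (center_notMem hF)
  exact r.notMem_rayDirection_of_isClosedAvoiding hF
    (by simpa using isClosedAvoiding_branchTail i) hrTail (by simp [branchTail]) hcenter

end starOfRays

/-- For the star `G` of countably many rays with center `c = none` and
`U = V(G) ∖ {c}`, the assignment sending each finite `F ⊆ U` to the connected component of
`c` in `G − F` is a `U`-direction which is not of the form `ρ_r` for any ray `r`; in
particular `ρ_• : Ω_U(G) → D_U(G)` is not surjective. -/
theorem starOfRays_rhoMap_not_surjective :
    ∃ ρ : UDirection starOfRays starU,
      (∀ (F : Finset (Option (ℕ × ℕ))) (hF : (F : Set (Option (ℕ × ℕ))) ⊆ starU),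
        ρ.comp F hF = {w | ReachAvoiding starOfRays (F : Set (Option (ℕ × ℕ))) none w}) ∧
      (∀ r : GraphRay starOfRays, ρ ≠ rayDirection starOfRays starU r) ∧
      ¬ Function.Surjective (rhoMap starOfRays starU) := by
  refine ⟨starOfRays.centerDirection, fun _ _ => rfl, starOfRays.centerDirection_ne_rayDirection,
    fun hsurj => ?_⟩
  obtain ⟨ξ, hξ⟩ := hsurj starOfRays.centerDirection
  induction ξ using Quot.ind with
  | mk r => exact starOfRays.centerDirection_ne_rayDirection r hξ.symm
end
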